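/- arXiv:2108.10141 — 5 statements merged into one kernel-verified Lean document; each statement's English description precedes it below -/
import Mathlib

section
/- Let G* be a DAG with vertices ordered by a causal order O. For any vertex X and any Y in prefix(X, O), Y is d-connected to X given prefix(X, O) \ {Y} if and only if Y is a parent of X in G*. -/
namespace BOSS

variable {V : Type*}

/-- `a` is an ancestor of / equal to `b` (descendant relation, reflexive-transitive). -/
def desc (E : V → V → Prop) : V → V → Prop := Relation.ReflTransGen E

/-- The interior vertex at index `i` of the walk `p` is a collider. -/
def colliderAt [Inhabited V] (E : V → V → Prop) (p : List V) (i : ℕ) : Prop :=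
  E (p.getD (i - 1) default) (p.getD i default) ∧ E (p.getD (i + 1) default) (p.getD i default)

/-- `p` is a path from `x` to `y` that is active (d-connecting) given conditioning set `Z`:
every interior collider has a descendant in `Z` and every interior non-collider is outside `Z`. -/
def activePath [Inhabited V] (E : V → V → Prop) (Z : Set V) (p : List V) (x y : V) : Prop :=
  2 ≤ p.length ∧ p.head? = some x ∧ p.getLast? = some y ∧ p.Nodup ∧
  p.Chain' (fun a b => E a b ∨ E b a) ∧
  ∀ i, 0 < i → i + 1 < p.length →
    (colliderAt E p i → ∃ d ∈ Z, desc E (p.getD i default) d) ∧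
    (¬ colliderAt E p i → p.getD i default ∉ Z)

/-- `x` and `y` are d-connected given `Z` in the graph with edge relation `E`. -/
def dConn [Inhabited V] (E : V → V → Prop) (x y : V) (Z : Set V) : Prop :=
  ∃ p, activePath E Z p x y

/-- d-separation. -/
def dSep [Inhabited V] (E : V → V → Prop) (x y : V) (Z : Set V) : Prop :=
  ¬ dConn E x y Z

/-- the set of vertices strictly preceding `x` in the permutation (list) `O`. -/
def prefixSet [DecidableEq V] (O : List V) (x : V) : Set V :=
  {y | y ∈ O ∧ O.idxOf y < O.idxOf x}

/-- `O` is a permutation of all the vertices. -/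
def isPermOf [Fintype V] (O : List V) : Prop := O.Nodup ∧ ∀ v : V, v ∈ O

/-- `O` is a causal (topological) order of the DAG with edges `E`. -/
def isCausalOrder [Fintype V] [DecidableEq V] (E : V → V → Prop) (O : List V) : Prop :=
  isPermOf O ∧ ∀ x y, E x y → O.idxOf x < O.idxOf y

/-- Verma–Pearl construction: `y` is a parent of `x` in `dag(O)` iff `y` precedes `x` in `O`
and `x` depends on `y` given `prefix(x, O) \ {y}` (relative to dependence oracle `dep`). -/
def vpParent [DecidableEq V] (dep : V → V → Set V → Prop) (O : List V) (y x : V) : Prop :=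
  y ∈ prefixSet O x ∧ dep x y (prefixSet O x \ {y})

/-- The number of edges of the Verma–Pearl DAG built from permutation `O`. -/
noncomputable def vpEdgeCount [DecidableEq V] (dep : V → V → Set V → Prop) (O : List V) : ℕ :=
  Set.ncard {p : V × V | vpParent dep O p.1 p.2}

/-- acyclicity of an edge relation. -/
def acyclic (E : V → V → Prop) : Prop := ∀ x, ¬ Relation.TransGen E x x

/-- number of edges of a graph given by edge relation `E`. -/
noncomputable def edgeCount (E : V → V → Prop) : ℕ := Set.ncard {p : V × V | E p.1 p.2}

end BOSS

/-!
Rank the vertices by their position in `O`, so that every edge goes up in rank. On an active path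
from `y` to `x` given `prefix(x, O) \ {y}`, an interior collider has a descendant in the prefix and
so ranks below `x`, while an interior non-collider lies outside the prefix and ranks above `x`.
A walk cannot leave a vertex of maximal rank along an edge, so such a vertex, if interior, is a
collider; hence no vertex of the path ranks above `x`. But an interior vertex next to `x` would
rank above `x` either way: as a non-collider, or as a collider entered by an edge from `x`. So the
path is a single edge between `y` and `x`, and it points into `x`.
-/

namespace BOSS

variable {V : Type*} {E : V → V → Prop}

theorem desc.rank_le {α : Type*} [Preorder α] {r : V → α} (hr : ∀ a b, E a b → r a < r b)
    {a b : V} (h : desc E a b) : r a ≤ r b := by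
  induction h with
  | refl => exact le_rfl
  | tail _ hbc ih => exact ih.trans (hr _ _ hbc).le

theorem _root_.List.IsChain.getD_succ {R : V → V → Prop} {p : List V} (hp : p.IsChain R) (d : V)
    {i : ℕ} (hi : i + 1 < p.length) : R (p.getD i d) (p.getD (i + 1) d) := by
  simpa only [List.getD_eq_getElem _ _ hi, List.getD_eq_getElem _ _ (Nat.lt_of_succ_lt hi)]
    using hp.getElem i hi

theorem colliderAt_of_forall_rank_le [Inhabited V] {α : Type*} [Preorder α] {r : V → α}
    (hr : ∀ a b, E a b → r a < r b) {p : List V} (hp : p.IsChain (fun a b => E a b ∨ E b a))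
    {i : ℕ} (hi₀ : 0 < i) (hi : i + 1 < p.length)
    (hmax : ∀ j < p.length, r (p.getD j default) ≤ r (p.getD i default)) :
    colliderAt E p i := by
  have hprev := hp.getD_succ default (i := i - 1) (by omega)
  rw [Nat.sub_add_cancel hi₀] at hprev
  refine ⟨hprev.resolve_right fun h => ?_, (hp.getD_succ default hi).resolve_left fun h => ?_⟩
  · exact (hr _ _ h).not_ge (hmax _ (by omega))
  · exact (hr _ _ h).not_ge (hmax _ hi)

theorem activePath_pair [Inhabited V] {Z : Set V} {x y : V} (h : E x y) (hxy : x ≠ y) :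
    activePath E Z [x, y] x y :=
  ⟨le_rfl, rfl, rfl, by simpa using hxy, List.isChain_pair.mpr (Or.inl h),
    fun i hi₀ hi => by simp only [List.length_cons, List.length_nil] at hi; omega⟩

namespace activePath

variable [Inhabited V] {Z : Set V} {p : List V} {x y : V}

theorem getD_zero (hp : activePath E Z p x y) : p.getD 0 default = x := by
  obtain ⟨t, rfl⟩ := List.head?_eq_some_iff.mp hp.2.1
  rfl

theorem getD_length_sub_one (hp : activePath E Z p x y) :
    p.getD (p.length - 1) default = y := by
  rw [List.getD_eq_getElem?_getD, ← List.getLast?_eq_getElem?, hp.2.2.1]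
  rfl

theorem getD_ne_getD (hp : activePath E Z p x y) {i j : ℕ} (hi : i < p.length)
    (hj : j < p.length) (hij : i ≠ j) : p.getD i default ≠ p.getD j default := by
  rw [List.getD_eq_getElem _ _ hi, List.getD_eq_getElem _ _ hj]
  exact fun h => hij (hp.2.2.2.1.getElem_inj_iff.mp h)

theorem eq_pair (hp : activePath E Z p x y) (h : p.length = 2) : p = [x, y] := by
  obtain ⟨a, b, rfl⟩ := List.length_eq_two.mp h
  obtain ⟨ha, hb⟩ : a = x ∧ b = y := ⟨by simpa using hp.2.1, by simpa using hp.2.2.1⟩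
  rw [ha, hb]

variable [DecidableEq V] {O : List V}

theorem idxOf_getD_lt_of_colliderAt [Fintype V] (hO : isCausalOrder E O) {b : V}
    (hZ : Z ⊆ prefixSet O b) (hp : activePath E Z p x y) {i : ℕ} (hi₀ : 0 < i)
    (hi : i + 1 < p.length) (hc : colliderAt E p i) : O.idxOf (p.getD i default) < O.idxOf b := by
  obtain ⟨d, hdZ, hd⟩ := (hp.2.2.2.2.2 i hi₀ hi).1 hc
  exact (hd.rank_le hO.2).trans_lt (hZ hdZ).2

theorem lt_idxOf_getD_of_not_colliderAt (hO : ∀ v, v ∈ O)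
    (hp : activePath E (prefixSet O y \ {x}) p x y) {i : ℕ} (hi₀ : 0 < i)
    (hi : i + 1 < p.length) (hc : ¬ colliderAt E p i) :
    O.idxOf y < O.idxOf (p.getD i default) := by
  have hZ := (hp.2.2.2.2.2 i hi₀ hi).2 hc
  have hx : p.getD i default ≠ x :=
    hp.getD_zero ▸ hp.getD_ne_getD (by omega) (by omega) (by omega)
  have hy : p.getD i default ≠ y :=
    hp.getD_length_sub_one ▸ hp.getD_ne_getD (by omega) (by omega) (by omega)
  by_contra! hle
  rcases hle.lt_or_eq with hlt | heq
  · exact hZ ⟨⟨hO _, hlt⟩, hx⟩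
  · exact hy ((List.idxOf_inj (hO _)).mp heq)

theorem idxOf_getD_le [Fintype V] (hO : isCausalOrder E O) (hZ : Z ⊆ prefixSet O y)
    (hp : activePath E Z p x y) (hxy : O.idxOf x ≤ O.idxOf y) {j : ℕ} (hj : j < p.length) :
    O.idxOf (p.getD j default) ≤ O.idxOf y := by
  obtain ⟨m, hm, hmax⟩ := Finset.exists_max_image (Finset.range p.length)
    (fun j => O.idxOf (p.getD j default)) ⟨0, Finset.mem_range.mpr (by have := hp.1; omega)⟩
  rw [Finset.mem_range] at hm
  have hmax' : ∀ j < p.length, O.idxOf (p.getD j default) ≤ O.idxOf (p.getD m default) :=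
    fun j hj => hmax j (Finset.mem_range.mpr hj)
  refine (hmax' j hj).trans ?_
  rcases Nat.eq_zero_or_pos m with rfl | hm₀
  · rwa [hp.getD_zero]
  by_cases hml : m = p.length - 1
  · rw [hml, hp.getD_length_sub_one]
  have hc := colliderAt_of_forall_rank_le hO.2 hp.2.2.2.2.1 hm₀ (by omega) hmax'
  exact (hp.idxOf_getD_lt_of_colliderAt hO hZ hm₀ (by omega) hc).le

theorem length_eq_two [Fintype V] (hO : isCausalOrder E O)
    (hp : activePath E (prefixSet O y \ {x}) p x y) (hx : x ∈ prefixSet O y) : p.length = 2 := by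
  by_contra hne
  have hlen : 3 ≤ p.length := by have := hp.1; omega
  have hi₀ : 0 < p.length - 2 := by omega
  have hi : p.length - 2 + 1 < p.length := by omega
  refine (hp.idxOf_getD_le hO Set.sdiff_subset hx.2.le (j := p.length - 2) (by omega)).not_gt ?_
  by_cases hc : colliderAt E p (p.length - 2)
  · have hyw := hc.2
    rw [show p.length - 2 + 1 = p.length - 1 by omega, hp.getD_length_sub_one] at hyw
    exact hO.2 _ _ hyw
  · exact hp.lt_idxOf_getD_of_not_colliderAt hO.1.2 hi₀ hi hc

end activePath

end BOSS

open BOSS in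
theorem dconn_prefix_iff_parent_general
    {V : Type*} [Fintype V] [DecidableEq V] [Inhabited V]
    (E : V → V → Prop)
    (O : List V) (hO : isCausalOrder E O)
    (x y : V) (hy : y ∈ prefixSet O x) :
    dConn E y x (prefixSet O x \ {y}) ↔ E y x := by
  have hyx : O.idxOf y < O.idxOf x := hy.2
  constructor
  · rintro ⟨p, hp⟩
    have hpair := hp.2.2.2.2.1
    rw [hp.eq_pair (hp.length_eq_two hO hy)] at hpair
    exact (List.isChain_pair.mp hpair).resolve_right fun hxy => (hO.2 _ _ hxy).not_gt hyx
  · intro hE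
    exact ⟨[y, x], activePath_pair hE (by rintro rfl; exact hyx.false)⟩

open BOSS in
/-- along a causal order, `y` in the prefix of `x` is d-connected to `x`
given the rest of the prefix iff `y` is a parent of `x`. -/
theorem dconn_prefix_iff_parent
    {V : Type*} [Fintype V] [DecidableEq V] [Inhabited V]
    (E : V → V → Prop) (hacyc : acyclic E)
    (O : List V) (hO : isCausalOrder E O)
    (x y : V) (hy : y ∈ prefixSet O x) :
    dConn E y x (prefixSet O x \ {y}) ↔ E y x :=
  dconn_prefix_iff_parent_general E O hO x y hy
end

section
/- Let S be a finite set of variables containing X, and suppose conditional independence in P satisfies the compositional graphoid axioms. Then the Markov blanket mb(X, S) — a minimal subset M of S \ {X} such that every Y ∈ S \ (M ∪ {X}) satisfies Y ⊥ X | M — is unique. -/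
/-!
Intersection and contraction make the blanket condition `X ⟂ S \ (M ∪ {X}) | M` closed under
intersecting two blankets: writing `I = M ∩ M'`, each of `M \ M'` and `M' \ M` is independent of
`X` given the rest of `M ∪ M'`, so together they are independent given `I`, and contraction
moves them out of the conditioning set. Hence `M ∩ M'` is a blanket inside both `M` and `M'`,
and minimality forces `M = M ∩ M' = M'`.
-/

/-- A minimal Markov blanket of `X` within `S`: a minimal `M ⊆ S \ {X}` such that
`X ⟂ S \ (M ∪ {X}) | M`. -/
def IsMarkovBlanket {V : Type*} (indep : Set V → Set V → Set V → Prop)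
    (X : V) (S M : Set V) : Prop :=
  M ⊆ S \ {X} ∧ indep {X} (S \ (M ∪ {X})) M ∧
    ∀ M' ⊆ S \ {X}, indep {X} (S \ (M' ∪ {X})) M' → ¬ M' ⊂ M

section Graphoid

variable {V : Type*} {indep : Set V → Set V → Set V → Prop}
  (decomp : ∀ A B C Z : Set V, indep A (B ∪ C) Z → indep A B Z)
  (weakUnion : ∀ A B C Z : Set V, indep A (B ∪ C) Z → indep A B (Z ∪ C))
  (contraction : ∀ A B C Z : Set V, indep A B (Z ∪ C) → indep A C Z → indep A (B ∪ C) Z)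
  (intersection : ∀ A B C Z : Set V, indep A B (Z ∪ C) → indep A C (Z ∪ B) → indep A (B ∪ C) Z)
include decomp weakUnion contraction intersection

theorem indep_union_of_indep_exchange {A I W W' R : Set V}
    (h : indep A (W' ∪ R) (I ∪ W)) (h' : indep A (W ∪ R) (I ∪ W')) :
    indep A (R ∪ (W ∪ W')) I := by
  have hW : indep A W (I ∪ W') := decomp _ _ _ _ h'
  have hW' : indep A W' (I ∪ W) := decomp _ _ _ _ h
  have hWW' : indep A (W ∪ W') I := intersection _ _ _ _ hW hW'
  have hR : indep A R ((I ∪ W) ∪ W') := weakUnion _ _ _ _ (Set.union_comm W' R ▸ h)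
  rw [Set.union_assoc] at hR
  exact contraction _ _ _ _ hR hWW'

theorem indep_blanket_inter {X : V} {S M M' : Set V} (hM : M ⊆ S \ {X}) (hM' : M' ⊆ S \ {X})
    (h : indep {X} (S \ (M ∪ {X})) M) (h' : indep {X} (S \ (M' ∪ {X})) M') :
    indep {X} (S \ (M ∩ M' ∪ {X})) (M ∩ M') := by
  have hComplM : S \ (M ∪ {X}) = M' \ M ∪ S \ (M ∪ M' ∪ {X}) := by
    ext y; have := @hM' y
    simp only [Set.mem_sdiff, Set.mem_union, Set.mem_singleton_iff] at *; tauto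
  have hComplM' : S \ (M' ∪ {X}) = M \ M' ∪ S \ (M ∪ M' ∪ {X}) := by
    ext y; have := @hM y
    simp only [Set.mem_sdiff, Set.mem_union, Set.mem_singleton_iff] at *; tauto
  have hComplI : S \ (M ∩ M' ∪ {X}) = S \ (M ∪ M' ∪ {X}) ∪ (M \ M' ∪ M' \ M) := by
    ext y; have := @hM y; have := @hM' y
    simp only [Set.mem_sdiff, Set.mem_union, Set.mem_inter_iff, Set.mem_singleton_iff] at *
    tauto
  rw [hComplI]
  refine indep_union_of_indep_exchange decomp weakUnion contraction intersection ?_ ?_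
  · rwa [Set.inter_union_sdiff, ← hComplM]
  · rwa [Set.inter_comm, Set.inter_union_sdiff, ← hComplM']

end Graphoid

theorem markov_blanket_unique_general
    {V : Type*}
    (indep : Set V → Set V → Set V → Prop)
    (decomp : ∀ A B C Z : Set V, indep A (B ∪ C) Z → indep A B Z)
    (weakUnion : ∀ A B C Z : Set V, indep A (B ∪ C) Z → indep A B (Z ∪ C))
    (contraction : ∀ A B C Z : Set V, indep A B (Z ∪ C) → indep A C Z → indep A (B ∪ C) Z)
    (intersection : ∀ A B C Z : Set V, indep A B (Z ∪ C) → indep A C (Z ∪ B) → indep A (B ∪ C) Z)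
    (X : V) (S : Set V)
    (M M' : Set V)
    (hM : IsMarkovBlanket indep X S M) (hM' : IsMarkovBlanket indep X S M') :
    M = M' := by
  obtain ⟨hMS, hMind, hMmin⟩ := hM
  obtain ⟨hM'S, hM'ind, hM'min⟩ := hM'
  have hI := indep_blanket_inter decomp weakUnion contraction intersection hMS hM'S hMind hM'ind
  have hIS : M ∩ M' ⊆ S \ {X} := Set.inter_subset_left.trans hMS
  have hIM : M ∩ M' = M := eq_of_le_of_not_lt Set.inter_subset_left (hMmin _ hIS hI)
  have hIM' : M ∩ M' = M' := eq_of_le_of_not_lt Set.inter_subset_right (hM'min _ hIS hI)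
  exact hIM.symm.trans hIM'

/-- under the compositional graphoid axioms (symmetry, decomposition, weak
union, contraction, intersection, composition), the Markov blanket of `X` in a finite
variable set `S` is unique. -/
theorem markov_blanket_unique
    {V : Type*} [Fintype V]
    (indep : Set V → Set V → Set V → Prop)
    (symm : ∀ A B Z : Set V, indep A B Z → indep B A Z)
    (decomp : ∀ A B C Z : Set V, indep A (B ∪ C) Z → indep A B Z)
    (weakUnion : ∀ A B C Z : Set V, indep A (B ∪ C) Z → indep A B (Z ∪ C))
    (contraction : ∀ A B C Z : Set V, indep A B (Z ∪ C) → indep A C Z → indep A (B ∪ C) Z)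
    (intersection : ∀ A B C Z : Set V, indep A B (Z ∪ C) → indep A C (Z ∪ B) → indep A (B ∪ C) Z)
    (composition : ∀ A B C Z : Set V, indep A B Z → indep A C Z → indep A (B ∪ C) Z)
    (X : V) (S : Set V) (hX : X ∈ S)
    (M M' : Set V)
    (hM : IsMarkovBlanket indep X S M) (hM' : IsMarkovBlanket indep X S M') :
    M = M' :=
  markov_blanket_unique_general indep decomp weakUnion contraction intersection X S M M' hM hM'
end

section
/- If the model (G*, P) satisfies the SMR assumption and permutation O minimizes the edge count of the Verma–Pearl DAG dag(O) over all permutations, then dag(O) belongs to the Markov equivalence class M(G*) of G*. (Correctness of the SP algorithm, Raskutti–Uhler.) -/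
/-!
Take a causal order `O'` of `G*`. An edge `y → x` of `dag(O')` records a dependence of `x` on `y`
given the other predecessors of `x`, so by the Markov property some path from `x` to `y` is
d-connecting given them. In a causal order such a path cannot leave `x` forwards (it would have to
turn back at a collider, whose descendants all come after `x`), and its vertex before `x` is a
non-collider, hence must be `y` itself: the path is the edge `y → x` of `G*`. So `dag(O') ⊆ G*`
and `|dag(O)| ≤ |dag(O')| ≤ |G*|` by minimality of `O`; as `dag(O)` is Markov, SMR puts it in
`M(G*)`.
-/

theorem List.Pairwise.rel_of_idxOf_lt {α : Type*} [DecidableEq α] {R : α → α → Prop} {l : List α}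
    (hl : l.Pairwise R) {a b : α} (hb : b ∈ l) (hab : l.idxOf a < l.idxOf b) : R a b := by
  have hb' : l.idxOf b < l.length := List.idxOf_lt_length_iff.mpr hb
  have ha' : l.idxOf a < l.length := hab.trans hb'
  simpa only [List.getElem_idxOf] using List.pairwise_iff_getElem.mp hl _ _ ha' hb' hab

namespace BOSS

variable {V : Type*} {E : V → V → Prop}

theorem acyclic_of_rel_imp_lt {α : Type*} [Preorder α] (f : V → α)
    (hf : ∀ a b, E a b → f a < f b) : acyclic E := by
  intro x hx
  have hlt := hx.lift f hf
  rw [Relation.transGen_eq_self] at hlt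
  exact lt_irrefl _ hlt

theorem acyclic.ne (h : acyclic E) {a b : V} (hab : E a b) : a ≠ b := by
  rintro rfl
  exact h a (.single hab)

theorem acyclic.asymm (h : acyclic E) {a b : V} (hab : E a b) : ¬ E b a :=
  fun hba => h a (.head hab (.single hba))

theorem acyclic.isPartialOrder (h : acyclic E) : IsPartialOrder V (Relation.ReflTransGen E) where
  refl _ := .refl
  trans _ _ _ := .trans
  antisymm a b hab hba := by
    rcases Relation.reflTransGen_iff_eq_or_transGen.mp hab with rfl | hab
    · rfl
    rcases Relation.reflTransGen_iff_eq_or_transGen.mp hba with rfl | hba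
    · rfl
    exact (h a (hab.trans hba)).elim

theorem acyclic.exists_isCausalOrder [Fintype V] [DecidableEq V] (h : acyclic E) :
    ∃ O : List V, isCausalOrder E O := by
  have := h.isPartialOrder
  obtain ⟨s, hs, hEs⟩ := extend_partialOrder (Relation.ReflTransGen E)
  classical
  let O := Finset.univ.sort s
  have hmem : ∀ v, v ∈ O := fun v => (Finset.mem_sort s).mpr (Finset.mem_univ v)
  refine ⟨O, ⟨Finset.sort_nodup _ _, hmem⟩, fun a b hab => ?_⟩
  by_contra! hba
  rcases hba.eq_or_lt with heq | hlt
  · exact h.ne hab ((List.idxOf_inj (hmem b)).mp heq).symm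
  · exact h.ne hab (antisymm (hEs _ _ (.single hab))
      ((Finset.pairwise_sort _ s).rel_of_idxOf_lt (hmem a) hlt))

theorem acyclic_vpParent [DecidableEq V] (dep : V → V → Set V → Prop) (O : List V) :
    acyclic (vpParent dep O) :=
  acyclic_of_rel_imp_lt O.idxOf fun _ _ h => h.1.2

theorem isCausalOrder.idxOf_le_of_desc [Fintype V] [DecidableEq V] {O : List V}
    (hO : isCausalOrder E O) {a b : V} (h : desc E a b) : O.idxOf a ≤ O.idxOf b := by
  induction h with
  | refl => exact le_rfl
  | tail _ hbc ih => exact ih.trans (hO.2 _ _ hbc).le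

theorem edgeCount_mono [Finite V] {E' : V → V → Prop} (h : ∀ a b, E a b → E' a b) :
    edgeCount E ≤ edgeCount E' :=
  Set.ncard_le_ncard (fun _ hp => h _ _ hp) (Set.toFinite _)

section ActivePath

variable [Inhabited V] {Z : Set V} {p : List V} {x y : V}

theorem activePath.getD_zero_s11 (hp : activePath E Z p x y) : p.getD 0 default = x := by
  simp [List.getD_eq_getElem?_getD, ← List.head?_eq_getElem?, hp.2.1]

theorem activePath.getD_length_sub_one_s11 (hp : activePath E Z p x y) :
    p.getD (p.length - 1) default = y := by
  simp [List.getD_eq_getElem?_getD, ← List.getLast?_eq_getElem?, hp.2.2.1]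

theorem activePath.adj (hp : activePath E Z p x y) {i : ℕ} (hi : i + 1 < p.length) :
    E (p.getD i default) (p.getD (i + 1) default) ∨
      E (p.getD (i + 1) default) (p.getD i default) := by
  simpa [List.getD_eq_getElem?_getD, hi, (Nat.lt_succ_self i).trans hi] using
    List.isChain_iff_getElem.mp hp.2.2.2.2.1 i hi

theorem activePath.exists_desc_mem_of_colliderAt (hp : activePath E Z p x y) {i : ℕ}
    (h0 : 0 < i) (hi : i + 1 < p.length) (hc : colliderAt E p i) :
    ∃ d ∈ Z, desc E (p.getD i default) d :=
  (hp.2.2.2.2.2 i h0 hi).1 hc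

theorem activePath.getD_notMem_of_not_colliderAt (hp : activePath E Z p x y) {i : ℕ}
    (h0 : 0 < i) (hi : i + 1 < p.length) (hc : ¬ colliderAt E p i) : p.getD i default ∉ Z :=
  (hp.2.2.2.2.2 i h0 hi).2 hc

theorem activePath.getD_inj (hp : activePath E Z p x y) {i j : ℕ} (hi : i < p.length)
    (hj : j < p.length) (h : p.getD i default = p.getD j default) : i = j := by
  simpa [List.getD_eq_getElem?_getD, hi, hj, hp.2.2.2.1.getElem_inj_iff] using h

/-- Once such a path leaves `x` forwards it cannot turn back: the turning point would be a
collider whose descendants all come after `x`, hence lie outside `Z`. -/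
theorem activePath.idxOf_lt_of_out_edge [Fintype V] [DecidableEq V] {O : List V}
    (hO : isCausalOrder E O) (hZ : ∀ z ∈ Z, O.idxOf z < O.idxOf x)
    (hp : activePath E Z p x y) (hout : E x (p.getD 1 default)) : O.idxOf x < O.idxOf y := by
  have directed : ∀ i, i + 1 < p.length →
      E (p.getD i default) (p.getD (i + 1) default) ∧ O.idxOf x ≤ O.idxOf (p.getD i default) := by
    intro i
    induction i with
    | zero => exact fun _ => by rw [hp.getD_zero_s11]; exact ⟨hout, le_rfl⟩
    | succ i ih =>
      intro hi
      obtain ⟨hE, hle⟩ := ih (by omega)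
      have hlt := hle.trans_lt (hO.2 _ _ hE)
      refine ⟨(hp.adj hi).resolve_right fun hback => ?_, hlt.le⟩
      obtain ⟨d, hdZ, hd⟩ := hp.exists_desc_mem_of_colliderAt i.succ_pos hi
        ⟨by simpa using hE, hback⟩
      exact (hZ d hdZ).not_ge (hlt.le.trans (hO.idxOf_le_of_desc hd))
  have hlen := hp.1
  obtain ⟨hE, hle⟩ := directed (p.length - 2) (by omega)
  rw [show p.length - 2 + 1 = p.length - 1 by omega, hp.getD_length_sub_one_s11] at hE
  exact hle.trans_lt (hO.2 _ _ hE)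

theorem isCausalOrder.edge_of_dConn_prefixSet [Fintype V] [DecidableEq V] {O : List V}
    (hacyc : acyclic E) (hO : isCausalOrder E O) (hy : y ∈ prefixSet O x)
    (hconn : dConn E x y (prefixSet O x \ {y})) : E y x := by
  obtain ⟨p, hp⟩ := hconn
  have hlen := hp.1
  rcases hp.adj (i := 0) (by omega) with hout | hin
  · rw [hp.getD_zero_s11] at hout
    exact absurd (hp.idxOf_lt_of_out_edge hO (fun z hz => hz.1.2) hout) hy.2.not_gt
  rw [hp.getD_zero_s11] at hin
  rcases hlen.eq_or_lt with hlen2 | hlen3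
  · rwa [show p.getD 1 default = y by rw [← hp.getD_length_sub_one_s11, ← hlen2]] at hin
  have hnc : ¬ colliderAt E p 1 := fun hc =>
    hacyc.asymm hin (by simpa only [Nat.sub_self, hp.getD_zero_s11] using hc.1)
  refine (hp.getD_notMem_of_not_colliderAt one_pos hlen3 hnc
    ⟨⟨hO.1.2 _, hO.2 _ _ hin⟩, fun h1y => ?_⟩).elim
  have := hp.getD_inj (i := 1) (j := p.length - 1) (by omega) (by omega)
    (h1y.trans hp.getD_length_sub_one_s11.symm)
  omega

end ActivePath

theorem vpParent_le_of_markov [Fintype V] [DecidableEq V] [Inhabited V] {O : List V}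
    {indep : V → V → Set V → Prop} (hacyc : acyclic E) (hO : isCausalOrder E O)
    (hmarkov : ∀ x y : V, ∀ Z : Set V, dSep E x y Z → indep x y Z) {a b : V}
    (h : vpParent (fun a b W => ¬ indep a b W) O a b) : E a b :=
  hO.edge_of_dConn_prefixSet hacyc h.1 (not_not.mp (mt (hmarkov _ _ _) h.2))

end BOSS

open BOSS in
/-- correctness of the SP algorithm, Raskutti–Uhler: under the SMR assumption,
any permutation minimizing the Verma–Pearl edge count yields a DAG in the Markov equivalence
class of `G*`. `indep` is the conditional-independence oracle of `P`; the dependence oracle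
used by the Verma–Pearl construction is its negation. -/
theorem sp_correct_under_smr
    {V : Type*} [Fintype V] [DecidableEq V] [Inhabited V]
    (E : V → V → Prop) (hacyc : acyclic E)
    (indep : V → V → Set V → Prop)
    -- the Markov assumption for (G*, P)
    (hmarkov : ∀ x y : V, ∀ Z : Set V, dSep E x y Z → indep x y Z)
    -- SMR: any Markov DAG outside the MEC of G* has strictly more edges than G*
    (hsmr : ∀ E' : V → V → Prop, acyclic E' →
      (∀ x y : V, ∀ Z : Set V, dSep E' x y Z → indep x y Z) →
      ¬ (∀ x y : V, ∀ Z : Set V, dSep E x y Z ↔ dSep E' x y Z) →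
      edgeCount E < edgeCount E')
    -- standard fact (Verma–Pearl): every permutation DAG is Markov to P
    (hvp : ∀ O' : List V, isPermOf O' →
      ∀ x y : V, ∀ Z : Set V, dSep (vpParent (fun a b W => ¬ indep a b W) O') x y Z →
        indep x y Z)
    (O : List V) (hO : isPermOf O)
    (hmin : ∀ O' : List V, isPermOf O' →
      vpEdgeCount (fun a b W => ¬ indep a b W) O ≤ vpEdgeCount (fun a b W => ¬ indep a b W) O') :
    ∀ x y : V, ∀ Z : Set V,
      dSep E x y Z ↔ dSep (vpParent (fun a b W => ¬ indep a b W) O) x y Z := by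
  by_contra hnotMEC
  obtain ⟨O', hO'⟩ := hacyc.exists_isCausalOrder
  have hsparse : edgeCount E < vpEdgeCount (fun a b W => ¬ indep a b W) O :=
    hsmr _ (acyclic_vpParent _ O) (hvp O hO) hnotMEC
  have hcausal : vpEdgeCount (fun a b W => ¬ indep a b W) O' ≤ edgeCount E :=
    edgeCount_mono fun _ _ => vpParent_le_of_markov hacyc hO' hmarkov
  exact (hsparse.trans_le ((hmin O' hO'.1).trans hcausal)).false
end

section
/- Under faithfulness, for any permutation O of the vertices of G*, the Verma–Pearl DAG dag(O) contains every edge of the skeleton of G*: if X and Y are adjacent in G*, then X and Y are adjacent in dag(O). -/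
namespace BOSS

variable {V : Type*}

theorem ne_of_adj_of_acyclic {E : V → V → Prop} (hacyc : acyclic E) {a b : V}
    (hab : E a b ∨ E b a) : a ≠ b := by
  rintro rfl
  exact hacyc a (.single (hab.elim id id))

-- The path `[a, b]` has no interior vertex, so it is active given any `Z`.
theorem dConn_of_adj [Inhabited V] {E : V → V → Prop} {a b : V} (hab : E a b ∨ E b a)
    (hne : a ≠ b) (Z : Set V) : dConn E a b Z := by
  refine ⟨[a, b], by simp, by simp, by simp, by simp [hne], List.isChain_pair.mpr hab, ?_⟩
  intro i hi hlt
  simp only [List.length_cons, List.length_nil] at hlt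
  omega

theorem mem_prefixSet_or_mem_prefixSet [DecidableEq V] {O : List V} {x y : V} (hx : x ∈ O)
    (hy : y ∈ O) (hne : x ≠ y) : x ∈ prefixSet O y ∨ y ∈ prefixSet O x := by
  have hidx : O.idxOf x ≠ O.idxOf y := fun h => hne ((List.idxOf_inj hx).mp h)
  exact hidx.lt_or_gt.imp (fun h => ⟨hx, h⟩) (fun h => ⟨hy, h⟩)

theorem vpParent_of_adj [DecidableEq V] [Inhabited V] {E : V → V → Prop}
    {indep : V → V → Set V → Prop} (hfaith : ∀ x y : V, ∀ Z : Set V, indep x y Z ↔ dSep E x y Z)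
    {O : List V} {x y : V} (hxy : E x y ∨ E y x) (hne : x ≠ y) (hx : x ∈ prefixSet O y) :
    vpParent (fun a b W => ¬ indep a b W) O x y :=
  ⟨hx, fun hind => (hfaith y x _).mp hind (dConn_of_adj hxy.symm hne.symm _)⟩

end BOSS

open BOSS in
/-- under faithfulness, the Verma–Pearl DAG from any permutation contains the
skeleton of `G*`: vertices adjacent in `G*` are adjacent in `dag(O)`. -/
theorem vp_dag_contains_skeleton
    {V : Type*} [Fintype V] [DecidableEq V] [Inhabited V]
    (E : V → V → Prop) (hacyc : acyclic E)
    (indep : V → V → Set V → Prop)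
    (hfaith : ∀ x y : V, ∀ Z : Set V, indep x y Z ↔ dSep E x y Z)
    (O : List V) (hO : isPermOf O) :
    ∀ x y, (E x y ∨ E y x) →
      (vpParent (fun a b W => ¬ indep a b W) O x y ∨
        vpParent (fun a b W => ¬ indep a b W) O y x) := by
  intro x y hxy
  have hne := ne_of_adj_of_acyclic hacyc hxy
  rcases mem_prefixSet_or_mem_prefixSet (hO.2 x) (hO.2 y) hne with hx | hy
  · exact .inl (vpParent_of_adj hfaith hxy hne hx)
  · exact .inr (vpParent_of_adj hfaith hxy.symm hne.symm hy)
end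

section
/- If G is a DAG and X, Y, Z are three vertices with Y and Z both parents of X and Y, Z non-adjacent in G (an unshielded collider Y→X←Z), then in any permutation O in which X precedes Y or X precedes Z, the Verma–Pearl DAG dag(O) built from the d-separation oracle of G makes Y and Z adjacent (a shield is added). -/
/-! With `x` earlier than the later of `y`, `z` in `O`, the collider `x` lies in the prefix that
conditions the Verma–Pearl test for that later vertex, so the path `y → x ← z` is active and the
earlier of the two becomes its parent. -/

namespace BOSS

variable {V : Type*}

theorem dConn_of_collider_mem [Inhabited V] {E : V → V → Prop} {Z : Set V} {w u x : V}
    (hwx : E w x) (hux : E u x) (hxZ : x ∈ Z) (hwx_ne : w ≠ x) (hux_ne : u ≠ x) (hwu : w ≠ u) :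
    dConn E w u Z := by
  refine ⟨[w, x, u], by simp, by simp, by simp, by simp [hwx_ne, hwu, hux_ne.symm],
    List.isChain_cons_cons.mpr ⟨.inl hwx, List.isChain_pair.mpr (.inr hux)⟩, fun i _ hi' => ?_⟩
  obtain rfl : i = 1 := by simp only [List.length_cons, List.length_nil] at hi'; omega
  exact ⟨fun _ => ⟨x, hxZ, Relation.ReflTransGen.refl⟩,
    fun hc => (hc ⟨by simpa using hwx, by simpa using hux⟩).elim⟩

theorem vpParent_of_collider_before [Inhabited V] [DecidableEq V] {E : V → V → Prop}
    {O : List V} (hmem : ∀ v, v ∈ O) {x y z : V} (hyx : E y x) (hzx : E z x)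
    (hyx_ne : y ≠ x) (hzx_ne : z ≠ x) (hyz_ne : y ≠ z)
    (hyz : O.idxOf y < O.idxOf z) (hxz : O.idxOf x < O.idxOf z) :
    vpParent (dConn E) O y z :=
  ⟨⟨hmem y, hyz⟩, dConn_of_collider_mem hzx hyx ⟨⟨hmem x, hxz⟩, hyx_ne.symm⟩ hzx_ne hyx_ne
    hyz_ne.symm⟩

end BOSS

open BOSS in
theorem unshielded_collider_forces_shield_general
    {V : Type*} [Fintype V] [DecidableEq V] [Inhabited V]
    (E : V → V → Prop)
    (x y z : V) (hyx : E y x) (hzx : E z x)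
    (hyz : ¬ E y z) (hzy : ¬ E z y) (hne : y ≠ z)
    (O : List V) (hO : isPermOf O)
    (hpos : O.idxOf x < O.idxOf y ∨ O.idxOf x < O.idxOf z) :
    vpParent (dConn E) O y z ∨ vpParent (dConn E) O z y := by
  have hyx_ne : y ≠ x := by rintro rfl; exact hzy hzx
  have hzx_ne : z ≠ x := by rintro rfl; exact hyz hyx
  have hidx : O.idxOf y ≠ O.idxOf z := fun h => hne ((List.idxOf_inj (hO.2 y)).mp h)
  rcases hidx.lt_or_gt with h | h
  · exact .inl <| vpParent_of_collider_before hO.2 hyx hzx hyx_ne hzx_ne hne h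
      (hpos.elim (·.trans h) id)
  · exact .inr <| vpParent_of_collider_before hO.2 hzx hyx hzx_ne hyx_ne hne.symm h
      (hpos.elim id (·.trans h))

open BOSS in
/-- for an unshielded collider y→x←z in `G`, any permutation placing `x` before
`y` or before `z` forces `y` and `z` to be adjacent in the Verma–Pearl DAG (a shield is
added). -/
theorem unshielded_collider_forces_shield
    {V : Type*} [Fintype V] [DecidableEq V] [Inhabited V]
    (E : V → V → Prop) (hacyc : acyclic E)
    (x y z : V) (hyx : E y x) (hzx : E z x)
    (hyz : ¬ E y z) (hzy : ¬ E z y) (hne : y ≠ z)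
    (O : List V) (hO : isPermOf O)
    (hpos : O.idxOf x < O.idxOf y ∨ O.idxOf x < O.idxOf z) :
    vpParent (dConn E) O y z ∨ vpParent (dConn E) O z y :=
  unshielded_collider_forces_shield_general E x y z hyx hzx hyz hzy hne O hO hpos
end
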